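/- Let n and d be positive integers, let F ∈ (ℂ^n)^{⊗d} be a symmetric tensor with corresponding degree-d polynomial p_F, and let I ⊆ V be a homogeneous ideal with I ⊆ Ann(p_F). Then Υ(I) ⊆ Ann(F). -/

import Mathlib

/-!
Common setup, following the paper "On the abundance of minimal border rank symmetric
tensors verifying Comon's conjecture".

* `S = ℂ[α_{i,j} : 1 ≤ i ≤ d, 1 ≤ j ≤ n]` is modeled as `MvPolynomial (Fin d × Fin n) ℂ`,
  with the `ℤ^d`-grading in which `deg α_{i,j} = e_i`; `Scomp n d u` is the
  multidegree-`u` component (`u : Fin d → ℕ`).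
* `V = ℂ[β_1,…,β_n]` is modeled as `MvPolynomial (Fin n) ℂ` with its standard grading;
  `Vcomp n N` is the degree-`N` component.
* The graded duals `T` and `P` are modeled by the same polynomial rings, with `S`
  (resp. `V`) acting by differentiation (`apolar`); `ann F` is the apolar
  (annihilator) ideal of `F`.
* A tensor `F ∈ (ℂ^n)^{⊗d}` is an element of the multidegree-`(1,…,1)` component
  `Scomp n d (fun _ => 1)` (a multilinear form in the `x_{i,j}`).
-/

open MvPolynomial Submodule Module

noncomputable section

namespace BorderComon

/-- the multidegree-`u` graded component of `S`. -/
def Scomp (n d : ℕ) (u : Fin d → ℕ) : Submodule ℂ (MvPolynomial (Fin d × Fin n) ℂ) :=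
  weightedHomogeneousSubmodule ℂ (fun p : Fin d × Fin n => Pi.single p.1 1) u

/-- the degree-`N` graded component of `V`. -/
def Vcomp (n : ℕ) (N : ℕ) : Submodule ℂ (MvPolynomial (Fin n) ℂ) :=
  homogeneousSubmodule (Fin n) ℂ N

/-- the diagonal ring map `π : S → V`, `α_{i,j} ↦ β_j`. -/
def piAlg (n d : ℕ) : MvPolynomial (Fin d × Fin n) ℂ →ₐ[ℂ] MvPolynomial (Fin n) ℂ :=
  aeval (fun p : Fin d × Fin n => X p.2)

/-- `π` as a `ℂ`-linear map. -/
def piL (n d : ℕ) : MvPolynomial (Fin d × Fin n) ℂ →ₗ[ℂ] MvPolynomial (Fin n) ℂ :=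
  (piAlg n d).toLinearMap

/-- the ring map `ρ : S → V`, `α_{1,j} ↦ β_j` and `α_{i,j} ↦ 0` for `i ≥ 2`
(rows are `0`-indexed, so the first row is row `0`). -/
def rho (n d : ℕ) : MvPolynomial (Fin d × Fin n) ℂ →ₐ[ℂ] MvPolynomial (Fin n) ℂ :=
  aeval (fun p : Fin d × Fin n => if (p.1 : ℕ) = 0 then X p.2 else 0)

/-- the result of differentiating `F` by the monomial `X^a`:
`∂^a X^b = (∏_i b_i!/(b_i-a_i)!) X^{b-a}` (and `= 0` unless `a ≤ b`, which is
automatic since the descending factorial vanishes there). -/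
def diffMon {σ : Type*} (a : σ →₀ ℕ) (F : MvPolynomial σ ℂ) : MvPolynomial σ ℂ :=
  ∑ b ∈ F.support, (F.coeff b * ∏ i ∈ a.support, ((b i).descFactorial (a i) : ℂ)) •
    monomial (b - a) (1 : ℂ)

/-- the apolarity action: `apolar F ψ = ψ ∘ F` is the result of letting `ψ` act on `F`
by differentiation, linearly in `ψ`. -/
def apolar {σ : Type*} (F : MvPolynomial σ ℂ) : MvPolynomial σ ℂ →ₗ[ℂ] MvPolynomial σ ℂ :=
  Finsupp.lsum ℂ (fun a : σ →₀ ℕ => LinearMap.toSpanSingleton ℂ _ (diffMon a F)) ∘ₗ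
    (AddMonoidAlgebra.coeffLinearEquiv ℂ).toLinearMap

/-- the apolar (annihilator) ideal `Ann(F) = {ψ : ψ ∘ F = 0}`, as a subspace. -/
def ann {σ : Type*} (F : MvPolynomial σ ℂ) : Submodule ℂ (MvPolynomial σ ℂ) :=
  LinearMap.ker (apolar F)

/-- the ideal `I_R ⊆ S` generated by the `2×2` minors
`α_{i,j} α_{k,ℓ} − α_{i,ℓ} α_{k,j}`, `i < k`, `j < ℓ`. -/
def IR (n d : ℕ) : Ideal (MvPolynomial (Fin d × Fin n) ℂ) :=
  Ideal.span {q | ∃ i k : Fin d, ∃ j l : Fin n, i < k ∧ j < l ∧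
    q = X (i, j) * X (k, l) - X (i, l) * X (k, j)}

/-- `J ⊆ S` is a (multigraded) homogeneous ideal: it is the sum of its
multigraded components. -/
def IsHomogS (n d : ℕ) (J : Ideal (MvPolynomial (Fin d × Fin n) ℂ)) : Prop :=
  Submodule.restrictScalars ℂ J = ⨆ u : Fin d → ℕ, (Submodule.restrictScalars ℂ J ⊓ Scomp n d u)

/-- `I ⊆ V` is a homogeneous ideal: it is the sum of its graded components. -/
def IsHomogV (n : ℕ) (I : Ideal (MvPolynomial (Fin n) ℂ)) : Prop :=
  Submodule.restrictScalars ℂ I = ⨆ N : ℕ, (Submodule.restrictScalars ℂ I ⊓ Vcomp n N)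

/-- the exponent redistribution underlying `ψ_u`: in the sorted list
`i_1 ≤ ⋯ ≤ i_N` of the indices of the monomial `β^γ` (value `j` occurring `γ j`
times, `N = |γ|`), row `i` receives the block of positions
`[∑_{i'<i} u i', ∑_{i'≤i} u i')`, while value `j` occupies positions
`[∑_{j'<j} γ j', ∑_{j'≤j} γ j')`; hence the exponent of `α_{i,j}` is the size of
the intersection of these two intervals. -/
def distrib (n d : ℕ) (u : Fin d → ℕ) (γ : Fin n →₀ ℕ) : (Fin d × Fin n) →₀ ℕ :=
  Finsupp.equivFunOnFinite.symm fun p : Fin d × Fin n =>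
    min (∑ i ∈ Finset.univ.filter fun i : Fin d => (i : ℕ) ≤ (p.1 : ℕ), u i)
        (∑ j ∈ Finset.univ.filter fun j : Fin n => (j : ℕ) ≤ (p.2 : ℕ), γ j)
    - max (∑ i ∈ Finset.univ.filter fun i : Fin d => (i : ℕ) < (p.1 : ℕ), u i)
          (∑ j ∈ Finset.univ.filter fun j : Fin n => (j : ℕ) < (p.2 : ℕ), γ j)

/-- the linear map `ψ_u : V → S` sending a monomial `β_{i_1} β_{i_2} ⋯ β_{i_N}`
with `i_1 ≤ i_2 ≤ ⋯ ≤ i_N` to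
`(α_{1,i_1} ⋯ α_{1,i_{u_1}}) (α_{2,i_{u_1+1}} ⋯ α_{2,i_{u_1+u_2}}) ⋯`.
(Its restriction to `Vcomp n (∑ i, u i)` is the map `ψ_u : V_{|u|} → S_u` of the
paper.) -/
def psi (n d : ℕ) (u : Fin d → ℕ) :
    MvPolynomial (Fin n) ℂ →ₗ[ℂ] MvPolynomial (Fin d × Fin n) ℂ :=
  (AddMonoidAlgebra.coeffLinearEquiv ℂ).symm.toLinearMap ∘ₗ
    Finsupp.lmapDomain ℂ ℂ (distrib n d u) ∘ₗ (AddMonoidAlgebra.coeffLinearEquiv ℂ).toLinearMap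

/-- `Υ(I) = I_R + ∑_{u} ψ_u(I_{|u|}) ⊆ S`. -/
def Upsilon (n d : ℕ) (I : Ideal (MvPolynomial (Fin n) ℂ)) :
    Submodule ℂ (MvPolynomial (Fin d × Fin n) ℂ) :=
  Submodule.restrictScalars ℂ (IR n d) ⊔
    ⨆ u : Fin d → ℕ, Submodule.map (psi n d u) (Submodule.restrictScalars ℂ I ⊓ Vcomp n (∑ i, u i))

/-- the irrelevant ideal `B_X = ∏_{i=1}^d (α_{i,1},…,α_{i,n}) ⊆ S`. -/
def BX (n d : ℕ) : Ideal (MvPolynomial (Fin d × Fin n) ℂ) :=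
  ∏ i : Fin d, Ideal.span (Set.range fun j : Fin n => X (i, j))

/-- the irrelevant ideal `B_Y = (β_1,…,β_n) ⊆ V`. -/
def BY (n : ℕ) : Ideal (MvPolynomial (Fin n) ℂ) :=
  Ideal.span (Set.range X)

/-- `Σ(J) = ⊕_{a ≥ 0} ⊕_{s ∈ ℰ} π(J_{a𝟏+s}) ⊆ V`, where
`ℰ = {0, e_1, e_1+e_2, …, e_1+⋯+e_{d-1}}` (the element `s` with `m` ones is
`fun i => if i < m then 1 else 0`). -/
def SigmaMap (n d : ℕ) (J : Ideal (MvPolynomial (Fin d × Fin n) ℂ)) :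
    Submodule ℂ (MvPolynomial (Fin n) ℂ) :=
  ⨆ a : ℕ, ⨆ m : Fin d, Submodule.map (piL n d)
    (Submodule.restrictScalars ℂ J ⊓ Scomp n d (fun i => a + if (i : ℕ) < (m : ℕ) then 1 else 0))

/-- the set of tensors of rank at most `r`: sums of `r` decomposable tensors
`v_1 ⊗ ⋯ ⊗ v_d = ∏_i (∑_j v_i(j) x_{i,j})`. -/
def rankLE (n d r : ℕ) : Set (MvPolynomial (Fin d × Fin n) ℂ) :=
  {F | ∃ v : Fin r → Fin d → Fin n → ℂ,
    F = ∑ s : Fin r, ∏ i : Fin d, ∑ j : Fin n, C (v s i j) * X (i, j)}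

/-- `F` has border rank at most `r`: coefficientwise (finitely many coefficients are
involved), `F` lies in the closure of the set of tensors of rank at most `r`. -/
def brkLE (n d : ℕ) (F : MvPolynomial (Fin d × Fin n) ℂ) (r : ℕ) : Prop :=
  (fun m => coeff m F) ∈ closure ((fun G => fun m => coeff m G) '' rankLE n d r)

/-- the border rank of a tensor. -/
def brk (n d : ℕ) (F : MvPolynomial (Fin d × Fin n) ℂ) : ℕ :=
  sInf {r | brkLE n d F r}

/-- polynomials that are sums of `r` `d`-th powers of linear forms. -/
def srankLE (n d r : ℕ) : Set (MvPolynomial (Fin n) ℂ) :=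
  {p | ∃ c : Fin r → Fin n → ℂ, p = ∑ s : Fin r, (∑ j : Fin n, C (c s j) * X j) ^ d}

/-- `p` has symmetric border rank at most `r`. -/
def sbrkLE (n d : ℕ) (p : MvPolynomial (Fin n) ℂ) (r : ℕ) : Prop :=
  (fun m => coeff m p) ∈ closure ((fun q => fun m => coeff m q) '' srankLE n d r)

/-- the symmetric border rank of a degree-`d` form. -/
def sbrk (n d : ℕ) (p : MvPolynomial (Fin n) ℂ) : ℕ :=
  sInf {r | sbrkLE n d p r}

/-- `F` is a symmetric tensor: invariant under the permutations of the `d` factors. -/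
def IsSymm (n d : ℕ) (F : MvPolynomial (Fin d × Fin n) ℂ) : Prop :=
  ∀ τ : Equiv.Perm (Fin d), rename (Prod.map τ id) F = F

/-- the degree-`d` polynomial `p_F` corresponding to a symmetric tensor `F`, obtained
by identifying all the rows of variables (`x_{i,j} ↦ y_j`); `F` is the polarization
of `p_F`. -/
def pF (n d : ℕ) (F : MvPolynomial (Fin d × Fin n) ℂ) : MvPolynomial (Fin n) ℂ :=
  rename Prod.snd F

/-- `F` is concise: the contraction `(ℂ^n)^* → (ℂ^n)^{⊗(d-1)}` of the first tensor
factor, `w ↦ F(x_{1,j} := w_j)`, is injective. -/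
def Concise (n d : ℕ) (F : MvPolynomial (Fin d × Fin n) ℂ) : Prop :=
  Function.Injective fun w : Fin n → ℂ =>
    aeval (fun p : Fin d × Fin n => if (p.1 : ℕ) = 0 then C (w p.2) else X p) F

/-- the ideal `∑_{0<u<𝟏} S·Ann(F)_u` generated by the components `Ann(F)_u`,
`0 < u < 𝟏` (componentwise). -/
def midIdeal (n d : ℕ) (F : MvPolynomial (Fin d × Fin n) ℂ) :
    Ideal (MvPolynomial (Fin d × Fin n) ℂ) :=
  Ideal.span (⋃ u ∈ {u : Fin d → ℕ | 0 < u ∧ u < fun _ => 1},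
    ((ann F ⊓ Scomp n d u : Submodule ℂ (MvPolynomial (Fin d × Fin n) ℂ)) :
      Set (MvPolynomial (Fin d × Fin n) ℂ)))

/-- `F` is a *sharp* tensor:
(1) `Ann(F)` has exactly `n-1` minimal generators of multidegree `𝟏`;
(2) `dim (S/Ann F)_u = n` for all `0 < u < 𝟏`;
(3) `dim (S/(Ann(F)_{e_i+e_j}))_{s e_i + e_j} = n` for all `i ≠ j`, `1 ≤ s ≤ d-1`. -/
def Sharp (n d : ℕ) (F : MvPolynomial (Fin d × Fin n) ℂ) : Prop :=
  (finrank ℂ (ann F ⊓ Scomp n d fun _ => 1 :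
        Submodule ℂ (MvPolynomial (Fin d × Fin n) ℂ)) -
      finrank ℂ (Submodule.restrictScalars ℂ (midIdeal n d F) ⊓ Scomp n d fun _ => 1 :
        Submodule ℂ (MvPolynomial (Fin d × Fin n) ℂ)) = n - 1) ∧
  (∀ u : Fin d → ℕ, 0 < u → u < (fun _ => 1) →
    finrank ℂ (Scomp n d u ⧸ Submodule.comap (Scomp n d u).subtype (ann F)) = n) ∧
  (∀ i j : Fin d, i ≠ j → ∀ s : ℕ, 1 ≤ s → s ≤ d - 1 →
    finrank ℂ (Scomp n d (Pi.single i s + Pi.single j 1) ⧸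
      Submodule.comap (Scomp n d (Pi.single i s + Pi.single j 1)).subtype
        (Submodule.restrictScalars ℂ (Ideal.span
          ((ann F ⊓ Scomp n d (Pi.single i 1 + Pi.single j 1) :
            Submodule ℂ (MvPolynomial (Fin d × Fin n) ℂ)) :
            Set (MvPolynomial (Fin d × Fin n) ℂ))))) = n)

/-!
Both kinds of generators of `Υ(I)` are checked coefficientwise. As `F` is multilinear,
`∂^a F` only involves the monomials `x^(c + a)` with exactly one variable in each row. For a
minor `α_{i,j} α_{k,l} - α_{i,l} α_{k,j}` this forces `c` to avoid the rows `i, k`, and then the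
transposition of these two rows, which fixes `F`, exchanges the two terms.
For `ψ ∈ I_{|u|}`, `ψ_u` spreads the exponent `γ` of each monomial of `ψ` over a matrix with row
sums `u` and column sums `γ`. Polarization, `d! F_b = (∏_v ε_v!) (p_F)_ε` for a multilinear `b`
with column sums `ε`, then turns the coefficient of `x^c` in `ψ_u(ψ) ∘ F` into a nonzero multiple
of the coefficient of `y^δ` in `ψ ∘ p_F = 0`, where `δ` is the vector of column sums of `c`.
-/

section Apolarity

variable {σ : Type*}

lemma mem_ann_iff {F ψ : MvPolynomial σ ℂ} : ψ ∈ ann F ↔ apolar F ψ = 0 := LinearMap.mem_ker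

lemma apolar_apply (F ψ : MvPolynomial σ ℂ) :
    apolar F ψ = (AddMonoidAlgebra.coeff ψ).sum fun a r => r • diffMon a F := rfl

lemma apolar_monomial (F : MvPolynomial σ ℂ) (a : σ →₀ ℕ) (r : ℂ) :
    apolar F (monomial a r) = r • diffMon a F :=
  Finsupp.sum_single_index (zero_smul ℂ _)

lemma coeff_apolar (G ψ : MvPolynomial σ ℂ) (c : σ →₀ ℕ) :
    (apolar G ψ).coeff c = ∑ a ∈ ψ.support, ψ.coeff a * (diffMon a G).coeff c := by
  rw [apolar_apply, Finsupp.sum, coeff_sum]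
  exact Finset.sum_congr rfl fun a _ => coeff_smul _ _ _

variable [Fintype σ] [DecidableEq σ]

lemma coeff_diffMon (a : σ →₀ ℕ) (F : MvPolynomial σ ℂ) (c : σ →₀ ℕ) :
    (diffMon a F).coeff c
      = F.coeff (c + a) * ∏ i, (((c + a) i).descFactorial (a i) : ℂ) := by
  rw [diffMon, coeff_sum, Finset.sum_eq_single (c + a)]
  · rw [coeff_smul, coeff_monomial, if_pos (add_tsub_cancel_right c a), smul_eq_mul, mul_one,
      Finset.prod_subset (Finset.subset_univ _)]
    intro i _ hi
    rw [Finsupp.notMem_support_iff.mp hi, Nat.descFactorial_zero, Nat.cast_one]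
  · intro b _ hne
    rw [coeff_smul, coeff_monomial]
    split_ifs with h
    · obtain ⟨i, hlt⟩ : ∃ i, b i < a i := by
        by_contra! hab
        exact hne (by rw [← tsub_add_cancel_of_le (Finsupp.le_def.mpr hab), h])
      have hi : i ∈ a.support := Finsupp.mem_support_iff.mpr (by omega)
      rw [Finset.prod_eq_zero hi (by exact_mod_cast Nat.descFactorial_eq_zero_iff_lt.mpr hlt),
        mul_zero, zero_smul]
    · rw [smul_zero]
  · intro h
    rw [notMem_support_iff.mp h, zero_mul, zero_smul, coeff_zero]

lemma diffMon_add (a b : σ →₀ ℕ) (F : MvPolynomial σ ℂ) :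
    diffMon (a + b) F = diffMon a (diffMon b F) := by
  ext c
  simp only [coeff_diffMon, ← add_assoc, mul_assoc, ← Finset.prod_mul_distrib, ← Nat.cast_mul,
    Finsupp.add_apply]
  congr 2 with i
  have h := Nat.descFactorial_mul_descFactorial (n := c i + a i + b i) (k := b i)
    (m := a i + b i) (by omega)
  rw [Nat.add_sub_cancel, Nat.add_sub_cancel, mul_comm] at h
  rw [h]

lemma diffMon_smul (a : σ →₀ ℕ) (r : ℂ) (F : MvPolynomial σ ℂ) :
    diffMon a (r • F) = r • diffMon a F := by
  ext c
  simp only [coeff_diffMon, coeff_smul, smul_eq_mul, mul_assoc]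

lemma diffMon_add_right (a : σ →₀ ℕ) (F G : MvPolynomial σ ℂ) :
    diffMon a (F + G) = diffMon a F + diffMon a G := by
  ext c
  simp only [coeff_diffMon, coeff_add, add_mul]

lemma diffMon_zero_right (a : σ →₀ ℕ) : diffMon a (0 : MvPolynomial σ ℂ) = 0 := by
  ext c
  simp only [coeff_diffMon, coeff_zero, zero_mul]

lemma apolar_zero_left (ψ : MvPolynomial σ ℂ) : apolar (0 : MvPolynomial σ ℂ) ψ = 0 :=
  Finset.sum_eq_zero fun a _ => by
    change (_ : ℂ) • diffMon a 0 = 0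
    rw [diffMon_zero_right, smul_zero]

lemma apolar_add_left (F G ψ : MvPolynomial σ ℂ) :
    apolar (F + G) ψ = apolar F ψ + apolar G ψ := by
  simp only [apolar_apply, Finsupp.sum, diffMon_add_right, smul_add, Finset.sum_add_distrib]

lemma apolar_mul (F p q : MvPolynomial σ ℂ) :
    apolar F (p * q) = apolar (apolar F q) p := by
  induction p using MvPolynomial.induction_on' with
  | add p₁ p₂ hp₁ hp₂ => rw [add_mul, map_add, hp₁, hp₂, map_add]
  | monomial a r =>
    induction q using MvPolynomial.induction_on' with
    | add q₁ q₂ hq₁ hq₂ => rw [mul_add, map_add, hq₁, hq₂, map_add, apolar_add_left]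
    | monomial b s =>
      rw [monomial_mul, apolar_monomial, apolar_monomial, apolar_monomial, diffMon_add,
        diffMon_smul, smul_smul]

def annIdeal (F : MvPolynomial σ ℂ) : Ideal (MvPolynomial σ ℂ) where
  __ := ann F
  smul_mem' p ψ (hψ : apolar F ψ = 0) := by
    change apolar F (p * ψ) = 0
    rw [apolar_mul, hψ, apolar_zero_left]

end Apolarity

lemma coeff_rename_eq_sum {R σ τ : Type*} [CommSemiring R] [DecidableEq τ] (f : σ → τ)
    (p : MvPolynomial σ R) (e : τ →₀ ℕ) :
    (rename f p).coeff e = ∑ b ∈ p.support with b.mapDomain f = e, p.coeff b := by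
  rw [Finset.sum_filter]
  change (Finsupp.mapDomain (Finsupp.mapDomain f) (AddMonoidAlgebra.coeff p)) e = _
  rw [Finsupp.mapDomain, Finsupp.sum_apply]
  exact Finset.sum_congr rfl fun b _ => Finsupp.single_apply

section RowSums

variable {n d : ℕ}

def rowSum (b : (Fin d × Fin n) →₀ ℕ) (i : Fin d) : ℕ := ∑ j, b (i, j)

lemma rowSum_add (a b : (Fin d × Fin n) →₀ ℕ) (i : Fin d) :
    rowSum (a + b) i = rowSum a i + rowSum b i := by
  simp only [rowSum, Finsupp.add_apply, Finset.sum_add_distrib]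

lemma le_rowSum (b : (Fin d × Fin n) →₀ ℕ) (p : Fin d × Fin n) : b p ≤ rowSum b p.1 :=
  Finset.single_le_sum (f := fun j => b (p.1, j)) (fun _ _ => Nat.zero_le _) (Finset.mem_univ p.2)

lemma rowSum_eq_of_coeff_ne_zero {u : Fin d → ℕ} {F : MvPolynomial (Fin d × Fin n) ℂ}
    (hF : F ∈ Scomp n d u) {b : (Fin d × Fin n) →₀ ℕ} (hb : F.coeff b ≠ 0) (i : Fin d) :
    rowSum b i = u i := by
  have h := congrFun ((mem_weightedHomogeneousSubmodule _ _ _ _).mp hF hb) i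
  rw [Finsupp.weight_apply, Finsupp.sum_fintype _ _ (by simp)] at h
  simp only [Finset.sum_apply, Pi.smul_apply, Pi.single_apply, smul_eq_mul, mul_ite, mul_one,
    mul_zero, Fintype.sum_prod_type] at h
  rw [Finset.sum_comm] at h
  simpa [rowSum] using h

lemma sum_eq_of_coeff_ne_zero {N : ℕ} {ψ : MvPolynomial (Fin n) ℂ} (hψ : ψ ∈ Vcomp n N)
    {γ : Fin n →₀ ℕ} (hγ : ψ.coeff γ ≠ 0) : ∑ j, γ j = N := by
  rw [← Finsupp.degree_eq_sum, Finsupp.degree_eq_weight_one]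
  exact hψ hγ

lemma IsSymm.coeff_mapDomain {F : MvPolynomial (Fin d × Fin n) ℂ} (hsym : IsSymm n d F)
    (τ : Equiv.Perm (Fin d)) (b : (Fin d × Fin n) →₀ ℕ) :
    F.coeff (b.mapDomain (Prod.map τ id)) = F.coeff b := by
  conv_lhs => rw [← hsym τ]
  exact coeff_rename_mapDomain _ (τ.injective.prodMap fun _ _ h => h) F b

lemma rowSum_single (p : Fin d × Fin n) (m : ℕ) (i : Fin d) :
    rowSum (Finsupp.single p m) i = if p.1 = i then m else 0 := by
  simp [rowSum, Finsupp.single_apply, Prod.ext_iff, ite_and]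

end RowSums

section Distrib

variable {n d : ℕ}

lemma mapDomain_snd_apply (b : (Fin d × Fin n) →₀ ℕ) (j : Fin n) :
    b.mapDomain Prod.snd j = ∑ i, b (i, j) := by
  rw [Finsupp.mapDomain, Finsupp.sum_apply, Finsupp.sum_fintype _ _ (by simp),
    Fintype.sum_prod_type]
  simp [Finsupp.single_apply]

def partialSum {m : ℕ} (u : Fin m → ℕ) (k : ℕ) : ℕ :=
  ∑ i ∈ Finset.univ.filter fun i : Fin m => (i : ℕ) < k, u i

lemma partialSum_mono {m : ℕ} (u : Fin m → ℕ) : Monotone (partialSum u) := fun _ _ hkl =>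
  Finset.sum_le_sum_of_subset (Finset.monotone_filter_right _ fun _ _ hi => hi.trans_le hkl)

lemma partialSum_zero {m : ℕ} (u : Fin m → ℕ) : partialSum u 0 = 0 := by
  simp [partialSum]

lemma partialSum_of_le {m : ℕ} (u : Fin m → ℕ) {k : ℕ} (h : m ≤ k) :
    partialSum u k = ∑ i, u i := by
  rw [partialSum, Finset.filter_true_of_mem fun i _ => i.isLt.trans_le h]

lemma partialSum_succ {m : ℕ} (u : Fin m → ℕ) (i : Fin m) :
    partialSum u (i + 1) = partialSum u i + u i := by
  have : (Finset.univ.filter fun i' : Fin m => (i' : ℕ) < i + 1)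
      = insert i (Finset.univ.filter fun i' : Fin m => (i' : ℕ) < i) := by
    ext i'
    simp only [Finset.mem_filter, Finset.mem_univ, true_and, Finset.mem_insert, Fin.ext_iff]
    omega
  rw [partialSum, partialSum, this, Finset.sum_insert (by simp), add_comm]

/-- The intervals `[g m, g (m + 1))` tile `[0, g N)`, so their overlaps with `[A', A)` add up
to `A - A'`. -/
lemma sum_range_overlap {A' A : ℕ} (h : A' ≤ A) {g : ℕ → ℕ} (hg : Monotone g) (h0 : g 0 = 0)
    {N : ℕ} (hN : A ≤ g N) :
    ∑ m ∈ Finset.range N, (min A (g (m + 1)) - max A' (g m)) = A - A' := by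
  have htel : ∀ m ∈ Finset.range N, min A (g (m + 1)) - max A' (g m)
      = max A' (min A (g (m + 1))) - max A' (min A (g m)) := fun m _ => by
    have := hg m.le_succ
    omega
  rw [Finset.sum_congr rfl htel, Finset.sum_range_tsub (f := fun m => max A' (min A (g m)))
    (fun k l hkl => by dsimp only; have := hg hkl; omega), h0]
  omega

lemma sum_overlap_partialSum {m k : ℕ} (u : Fin m → ℕ) (v : Fin k → ℕ)
    (h : ∑ j, v j = ∑ i, u i) (i : Fin m) :
    ∑ j : Fin k, (min (partialSum u (i + 1)) (partialSum v (j + 1))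
      - max (partialSum u i) (partialSum v j)) = u i := by
  have hN : partialSum u (i + 1) ≤ partialSum v k := by
    rw [partialSum_of_le v le_rfl, h, ← partialSum_of_le u le_rfl]
    exact partialSum_mono u i.isLt
  rw [Fin.sum_univ_eq_sum_range (fun j => min (partialSum u (i + 1)) (partialSum v (j + 1))
      - max (partialSum u i) (partialSum v j)),
    sum_range_overlap (partialSum_mono u (i : ℕ).le_succ) (partialSum_mono v)
      (partialSum_zero v) hN, partialSum_succ]
  omega

lemma distrib_apply (u : Fin d → ℕ) (γ : Fin n →₀ ℕ) (i : Fin d) (j : Fin n) :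
    distrib n d u γ (i, j)
      = min (partialSum u (i + 1)) (partialSum γ (j + 1))
        - max (partialSum u i) (partialSum γ j) := by
  simp only [distrib, partialSum, Finsupp.equivFunOnFinite_symm_apply_apply, Nat.lt_succ_iff]

lemma rowSum_distrib (u : Fin d → ℕ) (γ : Fin n →₀ ℕ) (h : ∑ j, γ j = ∑ i, u i)
    (i : Fin d) : rowSum (distrib n d u γ) i = u i := by
  simp only [rowSum, distrib_apply]
  exact sum_overlap_partialSum u γ h i

lemma mapDomain_snd_distrib (u : Fin d → ℕ) (γ : Fin n →₀ ℕ) (h : ∑ j, γ j = ∑ i, u i) :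
    (distrib n d u γ).mapDomain Prod.snd = γ := by
  ext j
  simp only [mapDomain_snd_apply, distrib_apply, min_comm (partialSum u _),
    max_comm (partialSum u _)]
  exact sum_overlap_partialSum γ u h.symm j

end Distrib

section Symmetrization

open Nat

lemma card_perm_comp_eq {α ι : Type*} [Fintype α] [DecidableEq α] [Fintype ι] [DecidableEq ι]
    {f g : α → ι} (h : ∀ v, Fintype.card {a // f a = v} = Fintype.card {a // g a = v}) :
    Fintype.card {τ : Equiv.Perm α // f ∘ τ = g} = ∏ v, (Fintype.card {a // f a = v})! := by
  let τ₀ : Equiv.Perm α := Equiv.ofFiberEquiv fun v => (Fintype.equivOfCardEq (h v)).symm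
  have hτ₀ : f ∘ τ₀ = g := funext (Equiv.ofFiberEquiv_map _)
  rw [← DomMulAct.stabilizer_card]
  refine Fintype.card_congr (Equiv.subtypeEquiv (Equiv.mulRight τ₀⁻¹) fun τ => ?_)
  rw [← hτ₀, Equiv.coe_mulRight, Equiv.Perm.coe_mul, Equiv.Perm.coe_inv]
  exact (Equiv.comp_symm_eq τ₀ f (f ∘ τ)).symm

variable {n d : ℕ}

def graphExp (J : Fin d → Fin n) : (Fin d × Fin n) →₀ ℕ := ∑ i, Finsupp.single (i, J i) 1

lemma graphExp_apply (J : Fin d → Fin n) (i : Fin d) (j : Fin n) :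
    graphExp J (i, j) = if J i = j then 1 else 0 := by
  simp [graphExp, Finsupp.finsetSum_apply, Finsupp.single_apply, ite_and]

lemma graphExp_injective : Function.Injective (graphExp (n := n) (d := d)) := by
  intro J J' h
  funext i
  have := congrArg (· (i, J i)) h
  simp only [graphExp_apply] at this
  by_contra hne
  simp [Ne.symm hne] at this

lemma exists_eq_graphExp {b : (Fin d × Fin n) →₀ ℕ} (hb : ∀ i, rowSum b i = 1) :
    ∃ J : Fin d → Fin n, b = graphExp J := by
  have hrow (i : Fin d) : ∃ j, b (i, j) ≠ 0 :=
    Finset.exists_ne_zero_of_sum_ne_zero (by rw [← rowSum, hb i]; exact one_ne_zero) |>.imp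
      fun _ => And.right
  choose J hJ using hrow
  refine ⟨J, Finsupp.ext fun ⟨i, j⟩ => ?_⟩
  have hle := le_rowSum b (i, j)
  rw [graphExp_apply]
  split_ifs with h
  · subst h
    have := hb i
    have := hJ i
    simp only at hle
    omega
  · have hpair : b (i, J i) + b (i, j) ≤ rowSum b i := by
      rw [← Finset.sum_pair (f := fun j => b (i, j)) h]
      exact Finset.sum_le_sum_of_subset (Finset.subset_univ _)
    have := hb i
    have := hJ i
    omega

lemma mapDomain_snd_graphExp (J : Fin d → Fin n) (j : Fin n) :
    (graphExp J).mapDomain Prod.snd j = Fintype.card {i // J i = j} := by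
  rw [mapDomain_snd_apply, Fintype.card_subtype, Finset.card_filter]
  simp only [graphExp_apply]

lemma mapDomain_graphExp_comp (J : Fin d → Fin n) (τ : Equiv.Perm (Fin d)) :
    (graphExp (J ∘ τ)).mapDomain (Prod.map τ id) = graphExp J := by
  rw [graphExp, graphExp, Finsupp.mapDomain_finsetSum]
  simp only [Finsupp.mapDomain_single, Prod.map_apply, id_eq, Function.comp_apply]
  exact Equiv.sum_comp τ fun i => Finsupp.single (i, J i) 1

lemma coeff_pF_eq_sum {F : MvPolynomial (Fin d × Fin n) ℂ} (hF : F ∈ Scomp n d fun _ => 1)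
    (ε : Fin n →₀ ℕ) :
    (pF n d F).coeff ε
      = ∑ J : Fin d → Fin n with (graphExp J).mapDomain Prod.snd = ε, F.coeff (graphExp J) := by
  rw [pF, coeff_rename_eq_sum,
    ← Finset.sum_image (f := fun b => F.coeff b) graphExp_injective.injOn]
  refine Finset.sum_subset (fun b hb => ?_) fun b hb hb' => ?_
  · obtain ⟨hsupp, hε⟩ := Finset.mem_filter.mp hb
    obtain ⟨J, rfl⟩ :=
      exists_eq_graphExp (rowSum_eq_of_coeff_ne_zero hF (mem_support_iff.mp hsupp))
    exact Finset.mem_image_of_mem _ (Finset.mem_filter.mpr ⟨Finset.mem_univ _, hε⟩)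
  · obtain ⟨J, hJ, rfl⟩ := Finset.mem_image.mp hb
    simp only [Finset.mem_filter, Finset.mem_univ, true_and] at hJ hb'
    exact notMem_support_iff.mp fun h => hb' ⟨h, hJ⟩

/-- The coefficient of `y^ε` in `pF` collects the `d! / ∏ ε_v!` multilinear monomials with
column sums `ε`, and by symmetry they all have the same coefficient in `F`. -/
lemma factorial_mul_coeff_eq {F : MvPolynomial (Fin d × Fin n) ℂ}
    (hF : F ∈ Scomp n d fun _ => 1) (hsym : IsSymm n d F) {b : (Fin d × Fin n) →₀ ℕ}
    (hb : ∀ i, rowSum b i = 1) :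
    (d ! : ℂ) * F.coeff b
      = (∏ v, ((b.mapDomain Prod.snd v)! : ℂ)) * (pF n d F).coeff (b.mapDomain Prod.snd) := by
  obtain ⟨J, rfl⟩ := exists_eq_graphExp hb
  set ε := (graphExp J).mapDomain Prod.snd
  have hfiber (J' : Fin d → Fin n) : (graphExp J').mapDomain Prod.snd = ε ↔
      ∀ v, Fintype.card {i // J i = v} = Fintype.card {i // J' i = v} := by
    simp only [ε, Finsupp.ext_iff, mapDomain_snd_graphExp, eq_comm]
  have hstab (J' : Fin d → Fin n) (hJ' : (graphExp J').mapDomain Prod.snd = ε) :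
      ((Finset.univ.filter fun τ : Equiv.Perm (Fin d) => J ∘ τ = J').card : ℂ)
        = ∏ v, ((ε v)! : ℂ) := by
    rw [← Fintype.card_subtype, card_perm_comp_eq ((hfiber J').mp hJ')]
    simp [ε, mapDomain_snd_graphExp]
  have hmaps (τ : Equiv.Perm (Fin d)) : (graphExp (J ∘ τ)).mapDomain Prod.snd = ε :=
    (hfiber _).mpr fun v => Fintype.card_congr (Equiv.subtypeEquiv τ fun _ => Iff.rfl).symm
  have horbit (τ : Equiv.Perm (Fin d)) : F.coeff (graphExp (J ∘ τ)) = F.coeff (graphExp J) := by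
    rw [← hsym.coeff_mapDomain τ, mapDomain_graphExp_comp]
  calc (d ! : ℂ) * F.coeff (graphExp J)
      = ∑ τ : Equiv.Perm (Fin d), F.coeff (graphExp (J ∘ τ)) := by
        simp only [horbit, Finset.sum_const, Finset.card_univ, Fintype.card_perm,
          Fintype.card_fin, nsmul_eq_mul]
    _ = ∑ J' : Fin d → Fin n with (graphExp J').mapDomain Prod.snd = ε,
          ((Finset.univ.filter fun τ : Equiv.Perm (Fin d) => J ∘ τ = J').card : ℂ)
            * F.coeff (graphExp J') := by
        rw [← Finset.sum_fiberwise_of_maps_to' (g := fun τ : Equiv.Perm (Fin d) => J ∘ τ)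
          (t := Finset.univ.filter fun J' => (graphExp J').mapDomain Prod.snd = ε)
          (fun τ _ => Finset.mem_filter.mpr ⟨Finset.mem_univ _, hmaps τ⟩)
          fun J' => F.coeff (graphExp J')]
        simp only [Finset.sum_const, nsmul_eq_mul]
    _ = (∏ v, ((ε v)! : ℂ)) * (pF n d F).coeff ε := by
        rw [coeff_pF_eq_sum hF, Finset.mul_sum]
        exact Finset.sum_congr rfl fun J' hJ' => by
          rw [hstab J' (Finset.mem_filter.mp hJ').2]

end Symmetrization

section Annihilation

variable {n d : ℕ}

lemma coeff_apolar_psi (ψ : MvPolynomial (Fin n) ℂ) (u : Fin d → ℕ)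
    (F : MvPolynomial (Fin d × Fin n) ℂ) (c : (Fin d × Fin n) →₀ ℕ) :
    (apolar F (psi n d u ψ)).coeff c
      = ∑ γ ∈ ψ.support, ψ.coeff γ * (diffMon (distrib n d u γ) F).coeff c := by
  change (apolar F (AddMonoidAlgebra.ofCoeff
    ((AddMonoidAlgebra.coeff ψ).mapDomain (distrib n d u)))).coeff c = _
  rw [apolar_apply, AddMonoidAlgebra.coeff_ofCoeff,
    Finsupp.sum_mapDomain_index (by simp) fun _ _ _ => add_smul _ _ _, Finsupp.sum, coeff_sum]
  exact Finset.sum_congr rfl fun γ _ => coeff_smul _ _ _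

lemma coeff_diffMon_of_mem_Scomp_one {F : MvPolynomial (Fin d × Fin n) ℂ}
    (hF : F ∈ Scomp n d fun _ => 1) (a c : (Fin d × Fin n) →₀ ℕ) :
    (diffMon a F).coeff c
      = if ∀ i, rowSum c i + rowSum a i = 1 then F.coeff (c + a) else 0 := by
  rw [coeff_diffMon]
  split_ifs with h
  swap
  · have : F.coeff (c + a) = 0 := by
      by_contra hne
      exact h fun i => by rw [← rowSum_add, rowSum_eq_of_coeff_ne_zero hF hne]
    rw [this, zero_mul]
  · rw [Finset.prod_eq_one, mul_one]
    intro p _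
    have hp : (c + a) p ≤ 1 := by
      have := le_rowSum (c + a) p
      rw [rowSum_add, h] at this
      exact this
    have : a p ≤ (c + a) p := by simp
    obtain h0 | h1 : a p = 0 ∨ a p = (c + a) p ∧ (c + a) p = 1 := by omega
    · simp [h0]
    · simp [h1.1, h1.2]

lemma mapDomain_swap_of_rowSum_eq_zero {c : (Fin d × Fin n) →₀ ℕ} {i k : Fin d}
    (hi : rowSum c i = 0) (hk : rowSum c k = 0) :
    c.mapDomain (Prod.map (Equiv.swap i k) id) = c := by
  conv_rhs => rw [← Finsupp.mapDomain_id (v := c)]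
  refine Finsupp.mapDomain_congr fun p hp => ?_
  have hle := le_rowSum c p
  have hp0 := Finsupp.mem_support_iff.mp hp
  have hpi : p.1 ≠ i := fun h => hp0 (by rw [h, hi] at hle; omega)
  have hpk : p.1 ≠ k := fun h => hp0 (by rw [h, hk] at hle; omega)
  exact Prod.ext (Equiv.swap_apply_of_ne_of_ne hpi hpk) rfl

/-- Transposing the rows `i` and `k` fixes `F` and exchanges the two monomials of the minor. -/
lemma apolar_minor_eq_zero {F : MvPolynomial (Fin d × Fin n) ℂ}
    (hF : F ∈ Scomp n d fun _ => 1) (hsym : IsSymm n d F) (i k : Fin d) (j l : Fin n) :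
    apolar F (X (i, j) * X (k, l) - X (i, l) * X (k, j)) = 0 := by
  rcases eq_or_ne i k with rfl | hik
  · rw [mul_comm, sub_self, map_zero]
  simp only [X, monomial_mul, one_mul, map_sub, apolar_monomial, one_smul, sub_eq_zero]
  ext c
  have hrow (j₁ j₂ : Fin n) (i' : Fin d) :
      rowSum (Finsupp.single (i, j₁) 1 + Finsupp.single (k, j₂) 1) i'
        = (if i = i' then 1 else 0) + if k = i' then 1 else 0 := by
    rw [rowSum_add, rowSum_single, rowSum_single]
  simp only [coeff_diffMon_of_mem_Scomp_one hF, hrow]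
  split_ifs with h
  · have hi := h i
    have hk := h k
    simp only [if_true, if_neg hik, if_neg hik.symm] at hi hk
    rw [← hsym.coeff_mapDomain (Equiv.swap i k), Finsupp.mapDomain_add,
      mapDomain_swap_of_rowSum_eq_zero (by omega) (by omega), Finsupp.mapDomain_add,
      Finsupp.mapDomain_single, Finsupp.mapDomain_single]
    simp only [Prod.map_apply, Equiv.swap_apply_left, Equiv.swap_apply_right, id_eq]
    rw [add_comm (Finsupp.single (k, j) 1)]
  · rfl

end Annihilation

section Psi

open Nat

variable {n d : ℕ}

lemma factorial_mul_prod_descFactorial (δ γ : Fin n →₀ ℕ) :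
    (∏ v, ((δ v)! : ℂ)) * ∏ v, (((δ + γ) v).descFactorial (γ v) : ℂ)
      = ∏ v, (((δ + γ) v)! : ℂ) := by
  rw [← Finset.prod_mul_distrib]
  refine Finset.prod_congr rfl fun v _ => ?_
  rw [← Nat.cast_mul, Finsupp.add_apply,
    ← Nat.factorial_mul_descFactorial (Nat.le_add_left (γ v) (δ v)), Nat.add_sub_cancel]

lemma factorial_mul_coeff_add_distrib {F : MvPolynomial (Fin d × Fin n) ℂ}
    (hF : F ∈ Scomp n d fun _ => 1) (hsym : IsSymm n d F) {u : Fin d → ℕ} {γ : Fin n →₀ ℕ}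
    (hγ : ∑ j, γ j = ∑ i, u i) {c : (Fin d × Fin n) →₀ ℕ} (hc : ∀ i, rowSum c i + u i = 1) :
    (d ! : ℂ) * F.coeff (c + distrib n d u γ)
      = (∏ v, ((c.mapDomain Prod.snd v)! : ℂ)) * ((pF n d F).coeff (c.mapDomain Prod.snd + γ)
        * ∏ v, (((c.mapDomain Prod.snd + γ) v).descFactorial (γ v) : ℂ)) := by
  have hmulti (i : Fin d) : rowSum (c + distrib n d u γ) i = 1 := by
    rw [rowSum_add, rowSum_distrib u γ hγ, hc]
  rw [factorial_mul_coeff_eq hF hsym hmulti, Finsupp.mapDomain_add,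
    mapDomain_snd_distrib u γ hγ, ← factorial_mul_prod_descFactorial]
  ring

lemma psi_mem_ann {F : MvPolynomial (Fin d × Fin n) ℂ} (hF : F ∈ Scomp n d fun _ => 1)
    (hsym : IsSymm n d F) {u : Fin d → ℕ} {ψ : MvPolynomial (Fin n) ℂ}
    (hψ : ψ ∈ Vcomp n (∑ i, u i)) (hψF : ψ ∈ ann (pF n d F)) :
    psi n d u ψ ∈ ann F := by
  rw [mem_ann_iff]
  ext c
  rw [coeff_apolar_psi, coeff_zero]
  have hdeg {γ} (hγ : γ ∈ ψ.support) : ∑ j, γ j = ∑ i, u i :=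
    sum_eq_of_coeff_ne_zero hψ (mem_support_iff.mp hγ)
  rw [Finset.sum_congr rfl fun γ hγ => by
    rw [coeff_diffMon_of_mem_Scomp_one hF, funext (rowSum_distrib u γ (hdeg hγ)), mul_ite,
      mul_zero]]
  split_ifs with hc
  swap
  · exact Finset.sum_const_zero
  set δ := c.mapDomain Prod.snd
  have hpF : ∑ γ ∈ ψ.support,
      ψ.coeff γ * ((pF n d F).coeff (δ + γ) * ∏ v, (((δ + γ) v).descFactorial (γ v) : ℂ))
        = 0 := by
    have := congrArg (coeff δ) (mem_ann_iff.mp hψF)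
    simpa only [coeff_apolar, coeff_diffMon, coeff_zero] using this
  have hterm : ∀ γ ∈ ψ.support, (d ! : ℂ) * (ψ.coeff γ * F.coeff (c + distrib n d u γ))
      = (∏ v, ((δ v)! : ℂ)) * (ψ.coeff γ
        * ((pF n d F).coeff (δ + γ) * ∏ v, (((δ + γ) v).descFactorial (γ v) : ℂ))) := by
    intro γ hγ
    rw [mul_left_comm, factorial_mul_coeff_add_distrib hF hsym (hdeg hγ) hc, mul_left_comm]
  have hsum : (d ! : ℂ) * ∑ γ ∈ ψ.support, ψ.coeff γ * F.coeff (c + distrib n d u γ) = 0 := by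
    rw [Finset.mul_sum, Finset.sum_congr rfl hterm, ← Finset.mul_sum, hpF, mul_zero]
  exact (mul_eq_zero.mp hsum).resolve_left (Nat.cast_ne_zero.mpr (factorial_ne_zero d))

end Psi

theorem stmt_8_general (n d : ℕ)
    (F : MvPolynomial (Fin d × Fin n) ℂ)
    (hF : F ∈ Scomp n d fun _ => 1) (hsym : IsSymm n d F)
    (I : Ideal (MvPolynomial (Fin n) ℂ))
    (hI : Submodule.restrictScalars ℂ I ≤ ann (pF n d F)) :
    Upsilon n d I ≤ ann F := by
  refine sup_le ?_ (iSup_le fun u => ?_)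
  · have hIR : IR n d ≤ annIdeal F := Ideal.span_le.mpr <| by
      rintro _ ⟨i, k, j, l, -, -, rfl⟩
      exact apolar_minor_eq_zero hF hsym i k j l
    exact hIR
  · rintro _ ⟨ψ, ⟨hψI, hψ⟩, rfl⟩
    exact psi_mem_ann hF hsym hψ (hI hψI)

/-- Proposition 4.6: if `F` is a symmetric tensor and `I ⊆ Ann(p_F)`
is a homogeneous ideal, then `Υ(I) ⊆ Ann(F)`. -/
theorem stmt_8 (n d : ℕ) (hn : 0 < n) (hd : 0 < d)
    (F : MvPolynomial (Fin d × Fin n) ℂ)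
    (hF : F ∈ Scomp n d fun _ => 1) (hsym : IsSymm n d F)
    (I : Ideal (MvPolynomial (Fin n) ℂ)) (hhom : IsHomogV n I)
    (hI : Submodule.restrictScalars ℂ I ≤ ann (pF n d F)) :
    Upsilon n d I ≤ ann F :=
  stmt_8_general n d F hF hsym I hI

end BorderComon
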